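/- arXiv:1711.07583 — 4 statements merged into one kernel-verified Lean document; each statement's English description precedes it below -/
import Mathlib

section
/- Let H be a complex separable Hilbert space, A : H → H a closed densely defined operator, and B a linear operator on C^N (N ≥ 1) such that the spectrum of A and the spectrum of B are disjoint. Then for every bounded linear operator V : C^N → H there exists a unique bounded linear operator U : C^N → D(A) (the domain of A) such that AU − UB = V. -/
/-!
For a resolvent point `z` of `A`, the Sylvester operator `U ↦ A U - ι U B` equals
`U ↦ (A - z ι) U - ι U (B - z)`, so an equation `A U - ι U B = V` can be solved for `U` up to a
term composed on the right with `B - z`. Peeling off, one at a time, the linear factors `X - z` of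
the minimal polynomial of `B` (whose roots lie in the spectrum of `B`, hence in the resolvent set
of `A`) gives injectivity, and solvability on the kernel of the product of the factors peeled off
so far; the full product annihilates `B`, so the Sylvester operator is bijective.
-/

open Polynomial

theorem mem_spectrum_of_isRoot_minpoly {K 𝔸 : Type*} [Field K] [Ring 𝔸] [Algebra K 𝔸] {a : 𝔸}
    (ha : IsIntegral K a) {z : K} (hz : (minpoly K a).IsRoot z) : z ∈ spectrum K a := by
  set q := minpoly K a /ₘ (X - C z)
  have hfactor : (X - C z) * q = minpoly K a := mul_divByMonic_eq_iff_isRoot.mpr hz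
  have hq_monic : q.Monic :=
    (monic_X_sub_C z).of_mul_monic_left (hfactor ▸ minpoly.monic ha)
  have hq : aeval a q ≠ 0 :=
    minpoly.aeval_ne_zero_of_dvdNotUnit_minpoly ha hq_monic
      ⟨hq_monic.ne_zero, X - C z, not_isUnit_X_sub_C z, by rw [← hfactor, mul_comm]⟩
  rw [spectrum.mem_iff]
  intro hunit
  have hprod := minpoly.aeval K a
  rw [← hfactor, map_mul, map_sub, aeval_X, aeval_C, ← neg_sub] at hprod
  exact hq (hunit.neg.mul_right_eq_zero.mp hprod)

section SylvesterOperator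

variable {𝕜 D H E : Type*} [NormedField 𝕜]
  [NormedAddCommGroup D] [NormedSpace 𝕜 D] [NormedAddCommGroup H] [NormedSpace 𝕜 H]
  [NormedAddCommGroup E] [NormedSpace 𝕜 E]

/-- `U ↦ A U - U B`, with the inclusion `ι` of the domain `D` of `A` into `H` made explicit. -/
def sylvesterOperator (A ι : D →L[𝕜] H) (B : E →L[𝕜] E) :
    (E →L[𝕜] D) →ₗ[𝕜] (E →L[𝕜] H) where
  toFun U := A ∘L U - ι ∘L U ∘L B
  map_add' U U' := by ext; simp; abel
  map_smul' c U := by ext; simp [smul_sub]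

variable {A ι : D →L[𝕜] H} {B : E →L[𝕜] E}

theorem sylvesterOperator_apply (U : E →L[𝕜] D) :
    sylvesterOperator A ι B U = A ∘L U - ι ∘L U ∘L B :=
  rfl

theorem sylvesterOperator_eq_shift (z : 𝕜) (U : E →L[𝕜] D) :
    sylvesterOperator A ι B U = (A - z • ι) ∘L U - ι ∘L U ∘L aeval B (X - C z) := by
  ext v
  simp [sylvesterOperator_apply, Algebra.algebraMap_eq_smul_one]

theorem sylvesterOperator_comp_aeval (U : E →L[𝕜] D) (q : 𝕜[X]) :
    sylvesterOperator A ι B (U ∘L aeval B q) = sylvesterOperator A ι B U ∘L aeval B q := by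
  have hcomm : B * aeval B q = aeval B q * B := by
    simpa using ((Commute.all X q).map (aeval B)).eq
  simp only [sylvesterOperator_apply, ContinuousLinearMap.sub_comp,
    ContinuousLinearMap.comp_assoc]
  rw [← ContinuousLinearMap.mul_def, ← ContinuousLinearMap.mul_def, hcomm]

variable (A ι B)

theorem exists_sylvesterOperator_apply_eq_of_aeval_eq_zero (s : Multiset 𝕜)
    (hs : ∀ z ∈ s, (A - z • ι).IsInvertible) (V : E →L[𝕜] H) :
    ∃ U : E →L[𝕜] D, ∀ v, aeval B (s.map (X - C ·)).prod v = 0 →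
      sylvesterOperator A ι B U v = V v := by
  induction s using Multiset.induction_on generalizing V with
  | empty => exact ⟨0, fun v hv => by simp_all⟩
  | cons z s ih =>
    obtain ⟨e, he⟩ := hs z (Multiset.mem_cons_self z s)
    set T := aeval B (X - C z)
    -- `U₁` absorbs the error term `ι e⁻¹ V T` left by the first-order guess `e⁻¹ V`.
    obtain ⟨U₁, hU₁⟩ := ih (fun w hw => hs w (Multiset.mem_cons_of_mem hw)) (ι ∘L e.symm ∘L V)
    have hguess : sylvesterOperator A ι B (e.symm ∘L V) = V - ι ∘L e.symm ∘L V ∘L T := by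
      rw [sylvesterOperator_eq_shift z, ← he, ← ContinuousLinearMap.comp_assoc,
        e.coe_comp_coe_symm, ContinuousLinearMap.id_comp, ContinuousLinearMap.comp_assoc]
    have hsum : sylvesterOperator A ι B (e.symm ∘L V + U₁ ∘L T) =
        V + (sylvesterOperator A ι B U₁ - ι ∘L e.symm ∘L V) ∘L T := by
      rw [map_add, sylvesterOperator_comp_aeval, hguess, ContinuousLinearMap.sub_comp]
      simp only [ContinuousLinearMap.comp_assoc]
      abel
    refine ⟨e.symm ∘L V + U₁ ∘L T, fun v hv => ?_⟩
    rw [Multiset.map_cons, Multiset.prod_cons, mul_comm, map_mul, mul_apply_eq_comp] at hv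
    rw [hsum, add_apply, ContinuousLinearMap.comp_apply, sub_apply, hU₁ _ hv, sub_self,
      add_zero]

theorem eq_zero_of_sylvesterOperator_eq_zero (s : Multiset 𝕜)
    (hs : ∀ z ∈ s, (A - z • ι).IsInvertible) {U : E →L[𝕜] D}
    (hU : sylvesterOperator A ι B U = 0) (hUs : U ∘L aeval B (s.map (X - C ·)).prod = 0) :
    U = 0 := by
  induction s using Multiset.induction_on with
  | empty => simpa [ContinuousLinearMap.one_def] using hUs
  | cons z s ih =>
    obtain ⟨e, he⟩ := hs z (Multiset.mem_cons_self z s)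
    have hUz : U = e.symm ∘L ι ∘L U ∘L aeval B (X - C z) := by
      rw [sylvesterOperator_eq_shift z, sub_eq_zero, ← he] at hU
      rw [← hU, ← ContinuousLinearMap.comp_assoc, e.coe_symm_comp_coe,
        ContinuousLinearMap.id_comp]
    refine ih (fun w hw => hs w (Multiset.mem_cons_of_mem hw)) ?_
    rw [hUz]
    simp only [ContinuousLinearMap.comp_assoc, ← ContinuousLinearMap.mul_def, ← map_mul]
    rw [Multiset.map_cons, Multiset.prod_cons] at hUs
    rw [hUs, ContinuousLinearMap.comp_zero, ContinuousLinearMap.comp_zero]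

theorem sylvesterOperator_bijective (s : Multiset 𝕜)
    (hs : ∀ z ∈ s, (A - z • ι).IsInvertible) (hB : aeval B (s.map (X - C ·)).prod = 0) :
    Function.Bijective (sylvesterOperator A ι B) := by
  refine ⟨(injective_iff_map_eq_zero _).2 fun U hU => ?_, fun V => ?_⟩
  · exact eq_zero_of_sylvesterOperator_eq_zero A ι B s hs hU
      (by rw [hB, ContinuousLinearMap.comp_zero])
  · obtain ⟨U, hU⟩ := exists_sylvesterOperator_apply_eq_of_aeval_eq_zero A ι B s hs V
    exact ⟨U, ContinuousLinearMap.ext fun v => hU v (by rw [hB]; rfl)⟩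

end SylvesterOperator

theorem stmt_0_general
    {H D : Type*} [NormedAddCommGroup H] [InnerProductSpace ℂ H]
    [NormedAddCommGroup D] [NormedSpace ℂ D]
    (ι : D →L[ℂ] H)
    {N : ℕ}
    (A : D →L[ℂ] H)
    (B : EuclideanSpace ℂ (Fin N) →L[ℂ] EuclideanSpace ℂ (Fin N))
    (hdisj : ∀ z ∈ spectrum ℂ B, ∃ R : H →L[ℂ] D,
      (∀ x : D, R (A x - z • ι x) = x) ∧ (∀ y : H, A (R y) - z • ι (R y) = y))
    (V : EuclideanSpace ℂ (Fin N) →L[ℂ] H) :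
    ∃! U : EuclideanSpace ℂ (Fin N) →L[ℂ] D,
      ∀ v, A (U v) - ι (U (B v)) = V v := by
  have hB : IsIntegral ℂ B := IsIntegral.of_finite ℂ B
  have hminpoly : aeval B ((minpoly ℂ B).roots.map (X - C ·)).prod = 0 := by
    rw [← (IsAlgClosed.splits _).eq_prod_roots_of_monic (minpoly.monic hB), minpoly.aeval]
  have hres : ∀ z ∈ (minpoly ℂ B).roots, (A - z • ι).IsInvertible := by
    intro z hz
    obtain ⟨R, hR, hR'⟩ :=
      hdisj z (mem_spectrum_of_isRoot_minpoly hB (isRoot_of_mem_roots hz))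
    exact .of_inverse (ContinuousLinearMap.ext fun y => by simpa using hR' y)
      (ContinuousLinearMap.ext fun x => by simpa using hR x)
  have hsylvester : ∀ U, (∀ v, A (U v) - ι (U (B v)) = V v) ↔ sylvesterOperator A ι B U = V :=
    fun U => by rw [ContinuousLinearMap.ext_iff]; rfl
  simpa only [hsylvester] using (sylvesterOperator_bijective A ι B _ hres hminpoly).existsUnique V

/-- Let `H` be a complex separable Hilbert space, `A` a closed densely
defined operator on `H` (modeled by a continuous linear map `A : D →L[ℂ] H` from a Banach
"domain" space `D` continuously and densely injected in `H` by `ι`), and `B` a linear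
operator on `ℂ^N` (`N ≥ 1`) whose spectrum is disjoint from that of `A` (every `z` in the
spectrum of `B` belongs to the resolvent set of `A`). Then for every bounded operator
`V : ℂ^N → H` there is a unique bounded operator `U : ℂ^N → D(A)` with `A U - U B = V`. -/
theorem stmt_0
    {H D : Type*} [NormedAddCommGroup H] [InnerProductSpace ℂ H]
    [CompleteSpace H] [TopologicalSpace.SeparableSpace H]
    [NormedAddCommGroup D] [NormedSpace ℂ D] [CompleteSpace D]
    (ι : D →L[ℂ] H) (hι : Function.Injective ι) (hdense : Dense (Set.range ι))
    {N : ℕ} (hN : 1 ≤ N)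
    (A : D →L[ℂ] H)
    (B : EuclideanSpace ℂ (Fin N) →L[ℂ] EuclideanSpace ℂ (Fin N))
    (hdisj : ∀ z ∈ spectrum ℂ B, ∃ R : H →L[ℂ] D,
      (∀ x : D, R (A x - z • ι x) = x) ∧ (∀ y : H, A (R y) - z • ι (R y) = y))
    (V : EuclideanSpace ℂ (Fin N) →L[ℂ] H) :
    ∃! U : EuclideanSpace ℂ (Fin N) →L[ℂ] D,
      ∀ v, A (U v) - ι (U (B v)) = V v :=
  stmt_0_general ι A B hdisj V
end

section
/- Let (λ, ν) and (λ, ν̃) be two formal-power-series solutions of (εD_t + P(t) − λ(t,ε))ν = 0 with the same λ, where ν = ν₀ + εν₁ + ⋯ and ν̃ = ν̃₀ + εν̃₁ + ⋯, ν₀ nonvanishing, in the simple isolated eigenvalue setting. Then there exists a formal power series C(ε) = C₀ + εC₁ + ⋯ with constant (t-independent) complex coefficients such that ν̃ = C(ε)ν as formal power series. -/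
open scoped ComplexInnerProductSpace

section Stmt6Aux

/-- Triangle sum swap. -/
lemma stmt6_tri {M : Type*} [AddCommMonoid M] (n : ℕ) (g : ℕ → ℕ → M) :
    ∑ j ∈ Finset.range (n+1), ∑ i ∈ Finset.range (n+1-j), g j i
      = ∑ j ∈ Finset.range (n+1), ∑ i ∈ Finset.range (n+1-j), g i j := by
  have key : ∀ h : ℕ → ℕ → M,
      ∑ j ∈ Finset.range (n+1), ∑ i ∈ Finset.range (n+1-j), h j i
        = ∑ j ∈ Finset.range (n+1), ∑ i ∈ Finset.range (n+1),
            if j + i ≤ n then h j i else 0 := by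
    intro h
    refine Finset.sum_congr rfl fun j hj => ?_
    rw [Finset.mem_range] at hj
    calc ∑ i ∈ Finset.range (n+1-j), h j i
        = ∑ i ∈ Finset.range (n+1-j), (if j + i ≤ n then h j i else 0) := by
          refine Finset.sum_congr rfl fun i hi => ?_
          rw [Finset.mem_range] at hi
          rw [if_pos (by omega)]
      _ = ∑ i ∈ Finset.range (n+1), (if j + i ≤ n then h j i else 0) := by
          refine Finset.sum_subset (Finset.range_subset_range.2 (by omega)) ?_
          intro i hi hni
          rw [Finset.mem_range] at hi hni
          rw [if_neg (by omega)]
  rw [key, key (fun j i => g i j), Finset.sum_comm]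
  refine Finset.sum_congr rfl fun j hj => Finset.sum_congr rfl fun i hi => ?_
  by_cases hc : i + j ≤ n
  · rw [if_pos hc, if_pos (by omega)]
  · rw [if_neg hc, if_neg (by omega)]

variable {H D : Type*} [NormedAddCommGroup H] [InnerProductSpace ℂ H] [CompleteSpace H]
    [NormedAddCommGroup D] [NormedSpace ℂ D] [CompleteSpace D]

/-- Derivative of a finite constant-coefficient combination. -/
lemma stmt6_hasDerivAt_sum (ν : ℕ → ℝ → D) (hν : ∀ k, ContDiff ℝ (⊤ : ℕ∞) (ν k))
    (c : ℕ → ℂ) (m : ℕ) (t : ℝ) :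
    HasDerivAt (fun s => ∑ j ∈ Finset.range (m+1), c j • ν (m-j) s)
      (∑ j ∈ Finset.range (m+1), c j • deriv (ν (m-j)) t) t := by
  refine HasDerivAt.fun_sum fun j _ => ?_
  exact (((hν (m-j)).differentiable (by simp) t).hasDerivAt).const_smul (c j)

/-- A constant-coefficient combination of shifted solutions is a formal solution:
the order-(m+1) equation. -/
lemma stmt6_qsol (ι : D →L[ℂ] H) (P : ℝ → D →L[ℂ] H) (lam : ℕ → ℝ → ℂ) (ν : ℕ → ℝ → D)
    (heq0 : ∀ t, P t (ν 0 t) = lam 0 t • ι (ν 0 t))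
    (heq : ∀ k t, P t (ν (k + 1) t) + ι ((-Complex.I) • deriv (ν k) t)
        = ∑ j ∈ Finset.range (k + 2), lam j t • ι (ν (k + 1 - j) t))
    (c : ℕ → ℂ) (m : ℕ) (t : ℝ) :
    P t (∑ j ∈ Finset.range (m+2), c j • ν (m+1-j) t)
      + ι ((-Complex.I) • ∑ j ∈ Finset.range (m+1), c j • deriv (ν (m-j)) t)
      = ∑ j ∈ Finset.range (m+2), lam j t •
          ι (∑ i ∈ Finset.range (m+1-j+1), c i • ν (m+1-j-i) t) := by
  have L1 : P t (∑ j ∈ Finset.range (m+2), c j • ν (m+1-j) t)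
      = ∑ j ∈ Finset.range (m+2), c j • P t (ν (m+1-j) t) := by
    rw [map_sum]
    exact Finset.sum_congr rfl fun j _ => (P t).map_smul _ _
  have L2 : ι ((-Complex.I) • ∑ j ∈ Finset.range (m+1), c j • deriv (ν (m-j)) t)
      = ∑ j ∈ Finset.range (m+1), c j • ι ((-Complex.I) • deriv (ν (m-j)) t) := by
    rw [Finset.smul_sum, map_sum]
    exact Finset.sum_congr rfl fun j _ => by rw [smul_comm, map_smul]
  rw [L1, L2, Finset.sum_range_succ
    (fun j => c j • P t (ν (m+1-j) t)) (m+1), add_right_comm,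
    ← Finset.sum_add_distrib]
  have L3 : ∑ j ∈ Finset.range (m+1),
      (c j • P t (ν (m+1-j) t) + c j • ι ((-Complex.I) • deriv (ν (m-j)) t))
      = ∑ j ∈ Finset.range (m+1), ∑ l ∈ Finset.range (m+2-j),
          (c j * lam l t) • ι (ν (m+1-(j+l)) t) := by
    refine Finset.sum_congr rfl fun j hj => ?_
    rw [Finset.mem_range] at hj
    have e1 : m + 1 - j = (m - j) + 1 := by omega
    rw [← smul_add, e1, heq (m-j) t, Finset.smul_sum]
    have e2 : m - j + 2 = m + 2 - j := by omega
    rw [e2]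
    refine Finset.sum_congr rfl fun l hl => ?_
    have e3 : m - j + 1 - l = m + 1 - (j + l) := by omega
    rw [smul_smul, e3]
  rw [L3]
  have L4 : c (m+1) • P t (ν (m+1-(m+1)) t)
      = ∑ l ∈ Finset.range (m+2-(m+1)), (c (m+1) * lam l t) • ι (ν (m+1-((m+1)+l)) t) := by
    rw [show m+2-(m+1) = 1 from by omega, Finset.sum_range_one]
    simp only [Nat.add_zero, Nat.sub_self]
    rw [heq0 t, smul_smul]
  rw [L4, ← Finset.sum_range_succ
    (fun j => ∑ l ∈ Finset.range (m+2-j), (c j * lam l t) • ι (ν (m+1-(j+l)) t)) (m+1)]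
  have L5 : ∑ j ∈ Finset.range (m+2), lam j t •
      ι (∑ i ∈ Finset.range (m+1-j+1), c i • ν (m+1-j-i) t)
      = ∑ j ∈ Finset.range (m+2), ∑ i ∈ Finset.range (m+2-j),
          (c i * lam j t) • ι (ν (m+1-(j+i)) t) := by
    refine Finset.sum_congr rfl fun j hj => ?_
    rw [Finset.mem_range] at hj
    rw [map_sum, Finset.smul_sum, show m+1-j+1 = m+2-j from by omega]
    refine Finset.sum_congr rfl fun i hi => ?_
    rw [map_smul, smul_smul, mul_comm, Nat.sub_sub]
  rw [L5]
  have := stmt6_tri (m+1) (fun j l => (c j * lam l t) • ι (ν (m+1-(j+l)) t))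
  simp only [show m+1+1 = m+2 from rfl] at this
  rw [this]
  refine Finset.sum_congr rfl fun j hj => Finset.sum_congr rfl fun i hi => ?_
  rw [Nat.add_comm i j]


/-- The inductive step: given that the first `k` coefficients work, there is a constant
`γ` making the order-`k` identity hold. -/
lemma stmt6_step (ι : D →L[ℂ] H) (P : ℝ → D →L[ℂ] H)
    (lam : ℕ → ℝ → ℂ) (ν νt : ℕ → ℝ → D) (delta0 : ℝ → H)
    (hν : ∀ k, ContDiff ℝ (⊤ : ℕ∞) (ν k)) (hνt : ∀ k, ContDiff ℝ (⊤ : ℕ∞) (νt k))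
    (hν0 : ∀ t, ν 0 t ≠ 0)
    (heq0 : ∀ t, P t (ν 0 t) = lam 0 t • ι (ν 0 t))
    (heq : ∀ k t, P t (ν (k + 1) t) + ι ((-Complex.I) • deriv (ν k) t)
        = ∑ j ∈ Finset.range (k + 2), lam j t • ι (ν (k + 1 - j) t))
    (hteq0 : ∀ t, P t (νt 0 t) = lam 0 t • ι (νt 0 t))
    (hteq : ∀ k t, P t (νt (k + 1) t) + ι ((-Complex.I) • deriv (νt k) t)
        = ∑ j ∈ Finset.range (k + 2), lam j t • ι (νt (k + 1 - j) t))
    (hker : ∀ t (u : D), P t u = lam 0 t • ι u → ∃ c : ℂ, u = c • ν 0 t)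
    (hsolv : ∀ t (v : H), (∃ u : D, P t u - lam 0 t • ι u = v) ↔ ⟪delta0 t, v⟫ = 0)
    (hnorm : ∀ t, ⟪delta0 t, ι (ν 0 t)⟫ = 1)
    (c : ℕ → ℂ) (k : ℕ)
    (IH : ∀ m, m < k → ∀ t, νt m t = ∑ j ∈ Finset.range (m+1), c j • ν (m-j) t) :
    ∃ γ : ℂ, ∀ t, νt k t = ∑ j ∈ Finset.range k, c j • ν (k-j) t + γ • ν 0 t := by
  classical
  set c' : ℕ → ℂ := fun j => if j < k then c j else 0 with hc'def
  have hc'lt : ∀ j, j < k → c' j = c j := fun j hj => if_pos hj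
  have hc'ge : ∀ j, ¬(j < k) → c' j = 0 := fun j hj => if_neg hj
  -- derivative of the residual
  have hDr : ∀ m t, HasDerivAt
      (fun s => νt m s - ∑ j ∈ Finset.range (m+1), c' j • ν (m-j) s)
      (deriv (νt m) t - ∑ j ∈ Finset.range (m+1), c' j • deriv (ν (m-j)) t) t :=
    fun m t => (((hνt m).differentiable (by simp) t).hasDerivAt).sub
      (stmt6_hasDerivAt_sum ν hν c' m t)
  -- the residual vanishes below order k
  have hr0 : ∀ m, m < k → ∀ s,
      νt m s - ∑ j ∈ Finset.range (m+1), c' j • ν (m-j) s = 0 := by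
    intro m hm s
    rw [sub_eq_zero, IH m hm s]
    refine Finset.sum_congr rfl fun j hj => ?_
    rw [Finset.mem_range] at hj
    rw [hc'lt j (by omega)]
  -- the residual satisfies the hierarchy of equations
  have hsolr : ∀ m t,
      P t (νt (m+1) t - ∑ j ∈ Finset.range (m+2), c' j • ν (m+1-j) t)
        + ι ((-Complex.I) • (deriv (νt m) t
            - ∑ j ∈ Finset.range (m+1), c' j • deriv (ν (m-j)) t))
      = ∑ j ∈ Finset.range (m+2), lam j t •
          ι (νt (m+1-j) t - ∑ i ∈ Finset.range (m+1-j+1), c' i • ν (m+1-j-i) t) := by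
    intro m t
    have hq := stmt6_qsol ι P lam ν heq0 heq c' m t
    have ht := hteq m t
    rw [map_sub, smul_sub, map_sub]
    have hsplit : ∀ j ∈ Finset.range (m+2), lam j t •
        ι (νt (m+1-j) t - ∑ i ∈ Finset.range (m+1-j+1), c' i • ν (m+1-j-i) t)
        = lam j t • ι (νt (m+1-j) t)
          - lam j t • ι (∑ i ∈ Finset.range (m+1-j+1), c' i • ν (m+1-j-i) t) :=
      fun j _ => by rw [map_sub, smul_sub]
    rw [Finset.sum_congr rfl hsplit, Finset.sum_sub_distrib, ← ht, ← hq]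
    abel
  -- order-0 equation for the residual
  have hsolr0 : ∀ t,
      P t (νt 0 t - ∑ j ∈ Finset.range 1, c' j • ν (0-j) t)
        = lam 0 t • ι (νt 0 t - ∑ j ∈ Finset.range 1, c' j • ν (0-j) t) := by
    intro t
    rw [Finset.sum_range_one, map_sub, (P t).map_smul, hteq0 t, heq0 t, map_sub,
      map_smul, smul_sub, smul_comm (c' 0)]
  -- the order-k residual is in the kernel
  have claimA : ∀ t,
      P t (νt k t - ∑ j ∈ Finset.range (k+1), c' j • ν (k-j) t)
        = lam 0 t • ι (νt k t - ∑ j ∈ Finset.range (k+1), c' j • ν (k-j) t) := by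
    intro t
    cases k with
    | zero => exact hsolr0 t
    | succ m =>
      have h := hsolr m t
      have hzero : (fun s => νt m s - ∑ j ∈ Finset.range (m+1), c' j • ν (m-j) s)
          = fun _ => (0:D) := funext (hr0 m (Nat.lt_succ_self m))
      have hz : deriv (νt m) t - ∑ j ∈ Finset.range (m+1), c' j • deriv (ν (m-j)) t = 0 := by
        have h1 := hDr m t
        rw [hzero] at h1
        exact h1.unique (hasDerivAt_const t 0)
      rw [hz, smul_zero, map_zero, add_zero] at h
      rw [Finset.sum_range_succ' (fun j => lam j t •
        ι (νt (m+1-j) t - ∑ i ∈ Finset.range (m+1-j+1), c' i • ν (m+1-j-i) t)) (m+1)] at h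
      have hvanish : ∀ j ∈ Finset.range (m+1), lam (j+1) t •
          ι (νt (m+1-(j+1)) t
            - ∑ i ∈ Finset.range (m+1-(j+1)+1), c' i • ν (m+1-(j+1)-i) t) = 0 := by
        intro j hj
        rw [Finset.mem_range] at hj
        have e : m+1-(j+1) = m - j := by omega
        rw [e, hr0 (m-j) (by omega) t, map_zero, smul_zero]
      rw [Finset.sum_congr rfl hvanish, Finset.sum_const_zero, zero_add] at h
      exact h
  have claimB : ∀ t, ∃ γ : ℂ,
      νt k t - ∑ j ∈ Finset.range (k+1), c' j • ν (k-j) t = γ • ν 0 t :=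
    fun t => hker t _ (claimA t)
  choose f hf using claimB
  -- differentiability of f
  have hrdiff : ∀ t, DifferentiableAt ℝ
      (fun s => νt k s - ∑ j ∈ Finset.range (k+1), c' j • ν (k-j) s) t :=
    fun t => (hDr k t).differentiableAt
  have hfd : ∀ t, DifferentiableAt ℝ f t := by
    intro t0
    obtain ⟨φ, hφ1, hφ2⟩ := exists_dual_vector ℂ (ν 0 t0) (norm_ne_zero_iff.2 (hν0 t0))
    have hφν : φ (ν 0 t0) ≠ 0 := by
      rw [hφ2]
      exact RCLike.ofReal_ne_zero.mpr (norm_ne_zero_iff.2 (hν0 t0))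
    have hev : ∀ᶠ s in nhds t0, φ (ν 0 s) ≠ 0 :=
      ((φ.continuous.comp ((hν 0).continuous)).continuousAt).eventually_ne hφν
    have hnum : DifferentiableAt ℝ
        (fun s => φ (νt k s - ∑ j ∈ Finset.range (k+1), c' j • ν (k-j) s)) t0 :=
      ((φ.restrictScalars ℝ).differentiableAt).comp t0 (hrdiff t0)
    have hden : DifferentiableAt ℝ (fun s => φ (ν 0 s)) t0 :=
      ((φ.restrictScalars ℝ).differentiableAt).comp t0 ((hν 0).differentiable (by simp) t0)
    have hgd : DifferentiableAt ℝ (fun s =>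
        φ (νt k s - ∑ j ∈ Finset.range (k+1), c' j • ν (k-j) s) / φ (ν 0 s)) t0 :=
      hnum.div hden hφν
    refine (Filter.EventuallyEq.differentiableAt_iff ?_).2 hgd
    filter_upwards [hev] with s hs
    rw [hf s, map_smul, smul_eq_mul, mul_div_assoc, div_self hs, mul_one]
  -- derivative of the residual expressed via f
  have hDf : ∀ t,
      deriv (νt k) t - ∑ j ∈ Finset.range (k+1), c' j • deriv (ν (k-j)) t
        = f t • deriv (ν 0) t + deriv f t • ν 0 t := by
    intro t
    have h1 := hDr k t
    have heqfun : (fun s => νt k s - ∑ j ∈ Finset.range (k+1), c' j • ν (k-j) s)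
        = fun s => f s • ν 0 s := funext hf
    rw [heqfun] at h1
    exact h1.unique (((hfd t).hasDerivAt).smul (((hν 0).differentiable (by simp) t).hasDerivAt))
  -- base solvability relation
  have hbase : ∀ t, ⟪delta0 t, lam 1 t • ι (ν 0 t) + ι (Complex.I • deriv (ν 0) t)⟫ = 0 := by
    intro t
    refine (hsolv t _).1 ⟨ν 1 t, ?_⟩
    have h := heq 0 t
    rw [Finset.sum_range_succ, Finset.sum_range_one] at h
    have hI : ι (Complex.I • deriv (ν 0) t) = - ι ((-Complex.I) • deriv (ν 0) t) := by
      rw [neg_smul, map_neg, neg_neg]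
    have h2 : P t (ν 1 t) = lam 0 t • ι (ν 1 t) + lam 1 t • ι (ν 0 t)
        - ι ((-Complex.I) • deriv (ν 0) t) := by
      rw [← h]; abel
    rw [h2, hI]; abel
  -- solvability relation at order k+1
  have claimC : ∀ t,
      ⟪delta0 t, lam 1 t • ι (νt k t - ∑ j ∈ Finset.range (k+1), c' j • ν (k-j) t)
        + ι (Complex.I • (deriv (νt k) t
            - ∑ j ∈ Finset.range (k+1), c' j • deriv (ν (k-j)) t))⟫ = 0 := by
    intro t
    refine (hsolv t _).1 ⟨νt (k+1) t - ∑ j ∈ Finset.range (k+2), c' j • ν (k+1-j) t, ?_⟩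
    have h := hsolr k t
    rw [Finset.sum_range_succ' (fun j => lam j t •
      ι (νt (k+1-j) t - ∑ i ∈ Finset.range (k+1-j+1), c' i • ν (k+1-j-i) t)) (k+1)] at h
    rw [Finset.sum_range_succ' (fun j => lam (j+1) t •
      ι (νt (k+1-(j+1)) t
        - ∑ i ∈ Finset.range (k+1-(j+1)+1), c' i • ν (k+1-(j+1)-i) t)) k] at h
    have hvan : ∀ j ∈ Finset.range k, lam (j+1+1) t •
        ι (νt (k+1-(j+1+1)) t
          - ∑ i ∈ Finset.range (k+1-(j+1+1)+1), c' i • ν (k+1-(j+1+1)-i) t) = 0 := by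
      intro j hj
      rw [Finset.mem_range] at hj
      have e : k+1-(j+1+1) = k - 1 - j := by omega
      rw [e, hr0 (k-1-j) (by omega) t, map_zero, smul_zero]
    rw [Finset.sum_congr rfl hvan, Finset.sum_const_zero, zero_add] at h
    simp only [Nat.zero_add, Nat.sub_zero, Nat.add_sub_cancel] at h
    have hI : ι (Complex.I • (deriv (νt k) t
        - ∑ j ∈ Finset.range (k+1), c' j • deriv (ν (k-j)) t))
        = - ι ((-Complex.I) • (deriv (νt k) t
            - ∑ j ∈ Finset.range (k+1), c' j • deriv (ν (k-j)) t)) := by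
      rw [neg_smul, map_neg, neg_neg]
    have h2 : P t (νt (k+1) t - ∑ j ∈ Finset.range (k+2), c' j • ν (k+1-j) t)
        = lam 1 t • ι (νt k t - ∑ i ∈ Finset.range (k+1), c' i • ν (k-i) t)
          + lam 0 t • ι (νt (k+1) t - ∑ i ∈ Finset.range (k+2), c' i • ν (k+1-i) t)
          - ι ((-Complex.I) • (deriv (νt k) t
              - ∑ j ∈ Finset.range (k+1), c' j • deriv (ν (k-j)) t)) := by
      rw [← h]; abel
    rw [h2, hI]; abel
  -- the derivative of f vanishes
  have hderiv0 : ∀ t, deriv f t = 0 := by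
    intro t
    have h := claimC t
    rw [hf t, hDf t] at h
    have hvec : lam 1 t • ι (f t • ν 0 t)
        + ι (Complex.I • (f t • deriv (ν 0) t + deriv f t • ν 0 t))
        = f t • (lam 1 t • ι (ν 0 t) + ι (Complex.I • deriv (ν 0) t))
          + (Complex.I * deriv f t) • ι (ν 0 t) := by
      simp only [map_add, map_smul, smul_add, smul_smul]
      module
    rw [hvec, inner_add_right, inner_smul_right, inner_smul_right, hbase t, hnorm t,
      mul_zero, mul_one, zero_add] at h
    exact (mul_eq_zero.1 h).resolve_left Complex.I_ne_zero
  have hconst : ∀ t, f t = f 0 :=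
    fun t => is_const_of_deriv_eq_zero (fun s => hfd s) hderiv0 t 0
  refine ⟨f 0, fun t => ?_⟩
  have h := hf t
  rw [hconst t, sub_eq_iff_eq_add] at h
  have hsplit : ∑ j ∈ Finset.range (k+1), c' j • ν (k-j) t
      = ∑ j ∈ Finset.range k, c j • ν (k-j) t := by
    rw [Finset.sum_range_succ, hc'ge k (lt_irrefl k), zero_smul, add_zero]
    exact Finset.sum_congr rfl fun j hj => by
      rw [Finset.mem_range] at hj
      rw [hc'lt j hj]
  rw [h, hsplit]
  exact add_comm _ _


end Stmt6Aux

/-- Let `(λ, ν)` and `(λ, ν̃)` be two formal-power-series solutions of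
`(ε D_t + P(t) − λ(t,ε)) ν = 0` with the same `λ`, in the simple isolated eigenvalue
setting (kernel of `P − λ₀` spanned by `ν₀ ≠ 0`, solvability of `(P − λ₀)u = v` iff
`(v|δ₀) = 0`, `(ν₀|δ₀) = 1`).  Then there is a formal power series
`C(ε) = C₀ + ε C₁ + ⋯` with constant coefficients such that `ν̃ = C(ε) ν`. -/
theorem stmt_6
    {H D : Type*} [NormedAddCommGroup H] [InnerProductSpace ℂ H] [CompleteSpace H]
    [NormedAddCommGroup D] [NormedSpace ℂ D] [CompleteSpace D]
    (ι : D →L[ℂ] H)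
    (P : ℝ → D →L[ℂ] H) (hP : ContDiff ℝ (⊤ : ℕ∞) P)
    (lam : ℕ → ℝ → ℂ) (ν νt : ℕ → ℝ → D) (delta0 : ℝ → H)
    (hlam : ∀ k, ContDiff ℝ (⊤ : ℕ∞) (lam k))
    (hν : ∀ k, ContDiff ℝ (⊤ : ℕ∞) (ν k)) (hνt : ∀ k, ContDiff ℝ (⊤ : ℕ∞) (νt k))
    (hν0 : ∀ t, ν 0 t ≠ 0)
    -- (λ, ν) is a formal solution
    (heq0 : ∀ t, P t (ν 0 t) = lam 0 t • ι (ν 0 t))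
    (heq : ∀ k t, P t (ν (k + 1) t) + ι ((-Complex.I) • deriv (ν k) t)
        = ∑ j ∈ Finset.range (k + 2), lam j t • ι (ν (k + 1 - j) t))
    -- (λ, ν̃) is a formal solution with the same λ
    (hteq0 : ∀ t, P t (νt 0 t) = lam 0 t • ι (νt 0 t))
    (hteq : ∀ k t, P t (νt (k + 1) t) + ι ((-Complex.I) • deriv (νt k) t)
        = ∑ j ∈ Finset.range (k + 2), lam j t • ι (νt (k + 1 - j) t))
    -- simple eigenvalue structure
    (hker : ∀ t (u : D), P t u = lam 0 t • ι u → ∃ c : ℂ, u = c • ν 0 t)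
    (hsolv : ∀ t (v : H), (∃ u : D, P t u - lam 0 t • ι u = v) ↔ ⟪delta0 t, v⟫ = 0)
    (hnorm : ∀ t, ⟪delta0 t, ι (ν 0 t)⟫ = 1) :
    ∃ c : ℕ → ℂ, ∀ k t, νt k t = ∑ j ∈ Finset.range (k + 1), c j • ν (k - j) t := by
  classical
  have step := stmt6_step ι P lam ν νt delta0 hν hνt hν0 heq0 heq hteq0 hteq hker hsolv hnorm
  -- existence of coefficients valid up to order n
  have key : ∀ n : ℕ, ∃ c : ℕ → ℂ, ∀ m, m ≤ n → ∀ t,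
      νt m t = ∑ j ∈ Finset.range (m+1), c j • ν (m-j) t := by
    intro n
    induction n with
    | zero =>
      obtain ⟨γ, hγ⟩ := step (fun _ => 0) 0 (fun m hm => absurd hm (Nat.not_lt_zero m))
      refine ⟨fun _ => γ, ?_⟩
      intro m hm t
      have hm0 : m = 0 := Nat.le_zero.1 hm
      subst hm0
      rw [hγ t, Finset.sum_range_zero, zero_add, Finset.sum_range_one]
    | succ n ihn =>
      obtain ⟨c, hc⟩ := ihn
      obtain ⟨γ, hγ⟩ := step c (n+1) (fun m hm t => hc m (by omega) t)
      refine ⟨fun j => if j = n+1 then γ else c j, ?_⟩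
      intro m hm t
      by_cases hmn : m ≤ n
      · rw [hc m hmn t]
        refine Finset.sum_congr rfl fun j hj => ?_
        rw [Finset.mem_range] at hj
        have hne : (fun j => if j = n+1 then γ else c j) j = c j := if_neg (by omega)
        rw [hne]
      · have hm1 : m = n+1 := by omega
        subst hm1
        rw [hγ t]
        conv_rhs => rw [Finset.sum_range_succ]
        congr 1
        · refine Finset.sum_congr rfl fun j hj => ?_
          rw [Finset.mem_range] at hj
          have hne : (fun j => if j = n+1 then γ else c j) j = c j := if_neg (by omega)
          rw [hne]
        · have hpe : (fun j => if j = n+1 then γ else c j) (n+1) = γ := if_pos rfl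
          rw [hpe, Nat.sub_self]
  -- uniqueness of the coefficients
  have uniq : ∀ (c c₂ : ℕ → ℂ) (n : ℕ),
      (∀ m, m ≤ n → ∀ t, νt m t = ∑ j ∈ Finset.range (m+1), c j • ν (m-j) t) →
      (∀ m, m ≤ n → ∀ t, νt m t = ∑ j ∈ Finset.range (m+1), c₂ j • ν (m-j) t) →
      ∀ j, j ≤ n → c j = c₂ j := by
    intro c c₂ n h1 h2 j
    induction j using Nat.strong_induction_on with
    | _ j ihj =>
      intro hjn
      have e1 := h1 j hjn 0
      have e2 := h2 j hjn 0
      have e3 : ∑ i ∈ Finset.range (j+1), c i • ν (j-i) 0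
          = ∑ i ∈ Finset.range (j+1), c₂ i • ν (j-i) 0 := by rw [← e1, ← e2]
      rw [Finset.sum_range_succ (fun i => c i • ν (j-i) 0) j,
        Finset.sum_range_succ (fun i => c₂ i • ν (j-i) 0) j, Nat.sub_self] at e3
      have esum : ∑ i ∈ Finset.range j, c i • ν (j-i) 0
          = ∑ i ∈ Finset.range j, c₂ i • ν (j-i) 0 := by
        refine Finset.sum_congr rfl fun i hi => ?_
        rw [Finset.mem_range] at hi
        rw [ihj i hi (by omega)]
      rw [esum] at e3
      have hcc := add_left_cancel e3
      have h0 : (c j - c₂ j) • ν 0 0 = 0 := by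
        rw [sub_smul, hcc, sub_self]
      rcases smul_eq_zero.1 h0 with hz | hz
      · exact sub_eq_zero.1 hz
      · exact absurd hz (hν0 0)
  -- assemble a single sequence of coefficients
  refine ⟨fun n => Classical.choose (key n) n, fun k t => ?_⟩
  have hk := Classical.choose_spec (key k)
  rw [hk k le_rfl t]
  refine Finset.sum_congr rfl fun j hj => ?_
  rw [Finset.mem_range] at hj
  have hj1 := Classical.choose_spec (key j)
  have hagree : Classical.choose (key j) j = Classical.choose (key k) j :=
    uniq _ _ j (fun m hm t => hj1 m hm t) (fun m hm t => hk m (by omega) t) j le_rfl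
  exact congrArg (fun z : ℂ => z • ν (k - j) t) hagree.symm
end

section
/- Let ε : I → (0,∞) be a smooth function satisfying ∂_s^k ε = O(ε^{k+1}) for all k ≥ 0, let f be a primitive of ε (f' = ε, strictly increasing) and g = f^{-1}. Then g'(t) = 1/ε(g(t)), and for every m ≥ 1, ∂_t^m g(t) = O(1/ε(g(t))). -/
open Finset in
/-- Leibniz-type bound for products with weighted estimates. -/
lemma stmt8_mul_bound {ε u v : ℝ → ℝ} (hεpos : ∀ s, 0 < ε s)
    (hu : ContDiff ℝ (⊤ : ℕ∞) u) (hv : ContDiff ℝ (⊤ : ℕ∞) v)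
    {a b : ℤ} {k : ℕ} {Cu Cv : ℝ} (hCu0 : 0 ≤ Cu) (hCv0 : 0 ≤ Cv)
    (hu' : ∀ j ≤ k, ∀ s, |iteratedDeriv j u s| ≤ Cu * ε s ^ (a + j))
    (hv' : ∀ j ≤ k, ∀ s, |iteratedDeriv j v s| ≤ Cv * ε s ^ (b + j))
    (s : ℝ) :
    |iteratedDeriv k (fun y => u y * v y) s| ≤ 2 ^ k * Cu * Cv * ε s ^ (a + b + k) := by
  have h0 : |iteratedDeriv k (fun y => u y * v y) s|
      = ‖iteratedFDeriv ℝ k (fun y => u y * v y) s‖ := by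
    rw [norm_iteratedFDeriv_eq_norm_iteratedDeriv, Real.norm_eq_abs]
  rw [h0]
  have h1 := norm_iteratedFDeriv_mul_le (𝕜 := ℝ) (n := k) hu hv s (by exact_mod_cast le_top)
  refine h1.trans ?_
  have h2 : ∀ i ∈ range (k + 1),
      (k.choose i : ℝ) * ‖iteratedFDeriv ℝ i u s‖ * ‖iteratedFDeriv ℝ (k - i) v s‖
        ≤ (k.choose i : ℝ) * (Cu * Cv * ε s ^ (a + b + k)) := by
    intro i hi
    rw [mem_range, Nat.lt_succ_iff] at hi
    have e1 : ‖iteratedFDeriv ℝ i u s‖ ≤ Cu * ε s ^ (a + i) := by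
      rw [norm_iteratedFDeriv_eq_norm_iteratedDeriv, Real.norm_eq_abs]
      exact hu' i hi s
    have e2 : ‖iteratedFDeriv ℝ (k - i) v s‖ ≤ Cv * ε s ^ (b + (k - i : ℕ)) := by
      rw [norm_iteratedFDeriv_eq_norm_iteratedDeriv, Real.norm_eq_abs]
      exact hv' (k - i) (Nat.sub_le _ _) s
    have e3 : Cu * ε s ^ (a + i) * (Cv * ε s ^ (b + (k - i : ℕ)))
        = Cu * Cv * ε s ^ (a + b + k) := by
      have : (a + i) + (b + (k - i : ℕ)) = a + b + k := by
        have : ((k - i : ℕ) : ℤ) = (k : ℤ) - i := by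
          exact_mod_cast Int.ofNat_sub hi
        rw [this]; ring
      rw [← this, zpow_add₀ (hεpos s).ne' (a + (i:ℤ)) (b + ((k-i:ℕ):ℤ))]; ring
    calc (k.choose i : ℝ) * ‖iteratedFDeriv ℝ i u s‖ * ‖iteratedFDeriv ℝ (k - i) v s‖
        ≤ (k.choose i : ℝ) * (Cu * ε s ^ (a + i)) * (Cv * ε s ^ (b + (k - i : ℕ))) := by
          apply mul_le_mul
          · exact mul_le_mul_of_nonneg_left e1 (by positivity)
          · exact e2
          · exact norm_nonneg _
          · exact mul_nonneg (Nat.cast_nonneg _)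
              (mul_nonneg hCu0 (zpow_nonneg (hεpos s).le _))
      _ = (k.choose i : ℝ) * (Cu * Cv * ε s ^ (a + b + k)) := by rw [mul_assoc, e3]
  refine (Finset.sum_le_sum h2).trans ?_
  rw [← Finset.sum_mul]
  have : ∑ i ∈ range (k + 1), (k.choose i : ℝ) = 2 ^ k := by
    exact_mod_cast Nat.sum_range_choose k
  rw [this]; ring_nf; rfl

/-- Weighted symbol class: all derivatives of `u` of order `j` are `O(ε^(a+j))`. -/
def Stmt8Mem (ε : ℝ → ℝ) (a : ℤ) (u : ℝ → ℝ) : Prop :=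
  ContDiff ℝ (⊤ : ℕ∞) u ∧
    ∀ k : ℕ, ∃ C : ℝ, 0 ≤ C ∧ ∀ j ≤ k, ∀ s, |iteratedDeriv j u s| ≤ C * ε s ^ (a + j)

lemma Stmt8Mem.mul {ε u v : ℝ → ℝ} (hεpos : ∀ s, 0 < ε s) {a b : ℤ}
    (hu : Stmt8Mem ε a u) (hv : Stmt8Mem ε b v) :
    Stmt8Mem ε (a + b) (fun y => u y * v y) := by
  refine ⟨hu.1.mul hv.1, fun k => ?_⟩
  obtain ⟨Cu, hCu0, hCu⟩ := hu.2 k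
  obtain ⟨Cv, hCv0, hCv⟩ := hv.2 k
  refine ⟨2 ^ k * Cu * Cv, by positivity, fun j hj s => ?_⟩
  have h := stmt8_mul_bound hεpos hu.1 hv.1 hCu0 hCv0
    (fun i hi => hCu i (hi.trans hj)) (fun i hi => hCv i (hi.trans hj)) s
  refine h.trans ?_
  have h2 : (2:ℝ) ^ j * Cu * Cv ≤ 2 ^ k * Cu * Cv := by
    have : (2:ℝ) ^ j ≤ 2 ^ k := pow_le_pow_right₀ one_le_two hj
    exact mul_le_mul_of_nonneg_right (mul_le_mul_of_nonneg_right this hCu0) hCv0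
  exact mul_le_mul_of_nonneg_right h2 (zpow_nonneg (hεpos s).le _)

lemma Stmt8Mem.deriv' {ε u : ℝ → ℝ} {a : ℤ} (hu : Stmt8Mem ε a u) :
    Stmt8Mem ε (a + 1) (deriv u) := by
  obtain ⟨hsm, hb⟩ := hu
  refine ⟨(contDiff_infty_iff_deriv.mp hsm).2, fun k => ?_⟩
  obtain ⟨C, hC0, hC⟩ := hb (k + 1)
  refine ⟨C, hC0, fun j hj s => ?_⟩
  have e1 : iteratedDeriv j (deriv u) s = iteratedDeriv (j + 1) u s := by
    rw [iteratedDeriv_succ']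
  have e2 : a + 1 + (j : ℤ) = a + ((j + 1 : ℕ) : ℤ) := by push_cast; ring
  rw [e1, e2]
  exact hC (j + 1) (by omega) s

lemma stmt8_inv {ε : ℝ → ℝ} (hε : ContDiff ℝ (⊤ : ℕ∞) ε) (hεpos : ∀ s, 0 < ε s)
    (hest : ∀ k : ℕ, ∃ C : ℝ, 0 ≤ C ∧
      ∀ j ≤ k, ∀ s, |iteratedDeriv j ε s| ≤ C * ε s ^ ((j : ℤ) + 1)) :
    Stmt8Mem ε (-1) (fun y => (ε y)⁻¹) := by
  have hsm : ContDiff ℝ (⊤ : ℕ∞) (fun y => (ε y)⁻¹) := hε.inv (fun s => (hεpos s).ne')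
  have hdinv : deriv (fun y => (ε y)⁻¹)
      = fun y => (-deriv ε y) * ((ε y)⁻¹ * (ε y)⁻¹) := by
    funext y
    have h1 : HasDerivAt (fun y => (ε y)⁻¹) (-(deriv ε y) / ε y ^ 2) y :=
      ((hε.differentiable (by simp) y).hasDerivAt).inv (hεpos y).ne'
    rw [h1.deriv]
    rw [div_eq_mul_inv, pow_two, mul_inv]
  have hdε : ContDiff ℝ (⊤ : ℕ∞) (fun y => -deriv ε y) := by
    have := (contDiff_infty_iff_deriv.mp hε).2
    exact this.neg
  refine ⟨hsm, ?_⟩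
  intro k
  induction k with
  | zero =>
    refine ⟨1, zero_le_one, fun j hj s => ?_⟩
    interval_cases j
    simp only [iteratedDeriv_zero, Nat.cast_zero, add_zero, one_mul]
    rw [abs_of_pos (inv_pos.2 (hεpos s)), zpow_neg_one]
  | succ k ih =>
    obtain ⟨C, hC0, hC⟩ := ih
    obtain ⟨D, hD0, hD⟩ := hest (k + 1)
    -- bounds for -ε' at weight 2
    have hnd : ∀ j ≤ k, ∀ s, |iteratedDeriv j (fun y => -deriv ε y) s|
        ≤ D * ε s ^ ((2 : ℤ) + j) := by
      intro j hj s
      have e1 : iteratedDeriv j (fun y => -deriv ε y) s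
          = -iteratedDeriv (j + 1) ε s := by
        rw [iteratedDeriv_fun_neg, ← iteratedDeriv_succ']
      rw [e1, abs_neg]
      have e2 : ((2 : ℤ) + j) = ((j + 1 : ℕ) : ℤ) + 1 := by push_cast; ring
      rw [e2]
      exact hD (j + 1) (by omega) s
    -- bounds for ε⁻¹ * ε⁻¹ at weight -2
    have hsq : ∀ j ≤ k, ∀ s,
        |iteratedDeriv j (fun y => (ε y)⁻¹ * (ε y)⁻¹) s|
          ≤ 2 ^ k * C * C * ε s ^ ((-2 : ℤ) + j) := by
      intro j hj s
      have h := stmt8_mul_bound hεpos hsm hsm hC0 hC0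
        (fun i hi => hC i (hi.trans hj)) (fun i hi => hC i (hi.trans hj)) s
      have e : ((-1 : ℤ) + -1 + j) = ((-2 : ℤ) + j) := by ring
      rw [e] at h
      refine h.trans ?_
      have h2 : (2:ℝ) ^ j * C * C ≤ 2 ^ k * C * C := by
        have : (2:ℝ) ^ j ≤ 2 ^ k := pow_le_pow_right₀ one_le_two hj
        exact mul_le_mul_of_nonneg_right (mul_le_mul_of_nonneg_right this hC0) hC0
      exact mul_le_mul_of_nonneg_right h2 (zpow_nonneg (hεpos s).le _)
    -- bound for iteratedDeriv (k+1)
    have hnew : ∀ s, |iteratedDeriv (k + 1) (fun y => (ε y)⁻¹) s|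
        ≤ 2 ^ k * D * (2 ^ k * C * C) * ε s ^ ((-1 : ℤ) + (k + 1 : ℕ)) := by
      intro s
      have e1 : iteratedDeriv (k + 1) (fun y => (ε y)⁻¹) s
          = iteratedDeriv k (fun y => (-deriv ε y) * ((ε y)⁻¹ * (ε y)⁻¹)) s := by
        rw [iteratedDeriv_succ', hdinv]
      rw [e1]
      have h := stmt8_mul_bound (a := 2) (b := -2) hεpos hdε (hsm.mul hsm)
        hD0 (by positivity) hnd hsq s
      have e2 : ((2 : ℤ) + -2 + k) = ((-1 : ℤ) + (k + 1 : ℕ)) := by push_cast; ring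
      rwa [e2] at h
    refine ⟨max C (2 ^ k * D * (2 ^ k * C * C)), le_max_of_le_left hC0, fun j hj s => ?_⟩
    rcases lt_or_eq_of_le hj with h | h
    · exact (hC j (Nat.lt_succ_iff.mp h) s).trans
        (mul_le_mul_of_nonneg_right (le_max_left _ _) (zpow_nonneg (hεpos s).le _))
    · subst h
      exact (hnew s).trans
        (mul_le_mul_of_nonneg_right (le_max_right _ _) (zpow_nonneg (hεpos s).le _))

/-- The sequence of coefficient functions: `∂_t^{n+1} g = B_n ∘ g`. -/
noncomputable def stmt8B (ε : ℝ → ℝ) : ℕ → ℝ → ℝ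
  | 0 => fun s => (ε s)⁻¹
  | n + 1 => fun s => deriv (stmt8B ε n) s * (ε s)⁻¹

lemma stmt8B_mem {ε : ℝ → ℝ} (hε : ContDiff ℝ (⊤ : ℕ∞) ε) (hεpos : ∀ s, 0 < ε s)
    (hest : ∀ k : ℕ, ∃ C : ℝ, 0 ≤ C ∧
      ∀ j ≤ k, ∀ s, |iteratedDeriv j ε s| ≤ C * ε s ^ ((j : ℤ) + 1)) :
    ∀ n, Stmt8Mem ε (-1) (stmt8B ε n) := by
  intro n
  induction n with
  | zero => exact stmt8_inv hε hεpos hest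
  | succ n ih =>
    have h := Stmt8Mem.mul hεpos ih.deriv' (stmt8_inv hε hεpos hest)
    norm_num at h
    exact h

/-- Let `ε : ℝ → (0,∞)` be smooth with `∂_s^k ε = O(ε^{k+1})` for all
`k ≥ 0`, let `f` be a primitive of `ε` (so `f' = ε > 0`, `f` strictly increasing) with
smooth inverse `g = f⁻¹`.  Then `g'(t) = 1/ε(g(t))` and, for every `m ≥ 1`,
`∂_t^m g(t) = O(1/ε(g(t)))`. -/
theorem stmt_8
    (ε f g : ℝ → ℝ)
    (hε : ContDiff ℝ (⊤ : ℕ∞) ε) (hεpos : ∀ s, 0 < ε s)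
    (hεest : ∀ k : ℕ, ∃ C : ℝ, ∀ s, |iteratedDeriv k ε s| ≤ C * ε s ^ (k + 1))
    (hf : ∀ s, HasDerivAt f (ε s) s)
    (hg : ContDiff ℝ (⊤ : ℕ∞) g)
    (hgf : ∀ s, g (f s) = s) (hfg : ∀ t, f (g t) = t) :
    (∀ t, deriv g t = 1 / ε (g t)) ∧
      ∀ m : ℕ, 1 ≤ m → ∃ C : ℝ, ∀ t, |iteratedDeriv m g t| ≤ C / ε (g t) := by
  have hε' : ContDiff ℝ (⊤ : ℕ∞) ε := hε.of_le (by simp)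
  have hest : ∀ k : ℕ, ∃ C : ℝ, 0 ≤ C ∧
      ∀ j ≤ k, ∀ s, |iteratedDeriv j ε s| ≤ C * ε s ^ ((j : ℤ) + 1) := by
    intro k
    choose Cs hCs using hεest
    refine ⟨∑ i ∈ Finset.range (k + 1), |Cs i|,
      Finset.sum_nonneg fun i _ => abs_nonneg _, fun j hj s => ?_⟩
    have e : ((j : ℤ) + 1) = ((j + 1 : ℕ) : ℤ) := by push_cast; ring
    rw [e, zpow_natCast]
    have h1 : |iteratedDeriv j ε s| ≤ |Cs j| * ε s ^ (j + 1) :=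
      (hCs j s).trans (mul_le_mul_of_nonneg_right (le_abs_self _)
        (pow_nonneg (hεpos s).le _))
    refine h1.trans (mul_le_mul_of_nonneg_right ?_ (pow_nonneg (hεpos s).le _))
    exact Finset.single_le_sum (fun i _ => abs_nonneg (Cs i))
      (Finset.mem_range.mpr (Nat.lt_succ_of_le hj))
  have hB := stmt8B_mem hε' hεpos hest
  -- derivative of g
  have hgd : ∀ t, HasDerivAt g ((ε (g t))⁻¹) t := by
    intro t
    have h1 : HasDerivAt g (deriv g t) t :=
      (hg.differentiable (by simp) t).hasDerivAt
    have h2 : HasDerivAt (f ∘ g) (ε (g t) * deriv g t) t := (hf (g t)).comp t h1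
    rw [show (f ∘ g) = id from funext hfg] at h2
    have h4 : ε (g t) * deriv g t = 1 := h2.unique (hasDerivAt_id t)
    have h5 : deriv g t = (ε (g t))⁻¹ := eq_inv_of_mul_eq_one_right (by linarith [h4])
    rw [← h5]; exact h1
  have hderivg : deriv g = fun t => (ε (g t))⁻¹ := funext fun t => (hgd t).deriv
  constructor
  · intro t
    rw [(hgd t).deriv, one_div]
  -- iterated derivatives of g
  have hiter : ∀ n : ℕ, iteratedDeriv (n + 1) g = fun t => stmt8B ε n (g t) := by
    intro n
    induction n with
    | zero => rw [iteratedDeriv_one, hderivg]; rfl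
    | succ n ih =>
      rw [iteratedDeriv_succ, ih]
      funext t
      have hc : HasDerivAt (fun t => stmt8B ε n (g t))
          (deriv (stmt8B ε n) (g t) * (ε (g t))⁻¹) t :=
        HasDerivAt.comp t
          (((hB n).1.differentiable (by simp) (g t)).hasDerivAt)
          (hgd t)
      rw [hc.deriv]
      rfl
  intro m hm
  obtain ⟨n, rfl⟩ : ∃ n, m = n + 1 := ⟨m - 1, by omega⟩
  obtain ⟨C, hC0, hC⟩ := (hB n).2 0
  refine ⟨C, fun t => ?_⟩
  rw [hiter n]
  have h := hC 0 le_rfl (g t)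
  simp only [Nat.cast_zero, add_zero, zpow_neg_one] at h
  rw [div_eq_mul_inv]
  exact h
end

section
/- In the adiabatic setting with a group of N₀ eigenvalues: let (U,Λ) and (Ũ,Λ̃) be two formal solutions of (εD_t + P(t))V − VΜ = 0 whose ranges lie in the range of the adiabatic projection π (i.e. πU = U, πŨ = Ũ), and suppose U₀(t) : C^{N₀} → Ran(π₀(t)) is bijective. Then there exists a unique formal power series M(t;ε) = M₀(t) + εM₁(t) + ⋯ of N₀×N₀ matrices, smooth in t, such that Ũ = UM. Conversely, if M₀(t) is invertible for all t, then Ũ := UM and Λ̃ := M^{-1}εD_t(M) + M^{-1}ΛM solve the same problem. -/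
open Finset ContinuousLinearMap

section Aux

variable {A B C D E : Type*}
  [NormedAddCommGroup A] [NormedSpace ℂ A]
  [NormedAddCommGroup B] [NormedSpace ℂ B]
  [NormedAddCommGroup C] [NormedSpace ℂ C]
  [NormedAddCommGroup D] [NormedSpace ℂ D]
  [NormedAddCommGroup E] [NormedSpace ℂ E]

/-- Convolution of coefficient families. -/
noncomputable def cnv (f : ℕ → ℝ → B →L[ℂ] C) (g : ℕ → ℝ → A →L[ℂ] B) :
    ℕ → ℝ → A →L[ℂ] C :=
  fun k t => ∑ j ∈ Finset.range (k + 1), (f j t).comp (g (k - j) t)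

lemma cnv_apply (f : ℕ → ℝ → B →L[ℂ] C) (g : ℕ → ℝ → A →L[ℂ] B) (k : ℕ) (t : ℝ) (v : A) :
    cnv f g k t v = ∑ j ∈ Finset.range (k + 1), f j t (g (k - j) t v) := by
  simp [cnv, ContinuousLinearMap.sum_apply]

lemma sum_tri_comm {β : Type*} [AddCommMonoid β] (n : ℕ) (F : ℕ → ℕ → β) :
    ∑ a ∈ Finset.range n, ∑ b ∈ Finset.range (n - a), F a b
      = ∑ b ∈ Finset.range n, ∑ a ∈ Finset.range (n - b), F a b := by
  rw [Finset.sum_sigma', Finset.sum_sigma']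
  refine Finset.sum_nbij' (fun p => ⟨p.2, p.1⟩) (fun p => ⟨p.2, p.1⟩) ?_ ?_ ?_ ?_ ?_ <;>
    simp only [Finset.mem_sigma, Finset.mem_range] <;> intros <;> first | omega | rfl | trivial

lemma cnv_assoc (f : ℕ → ℝ → C →L[ℂ] D) (g : ℕ → ℝ → B →L[ℂ] C) (h : ℕ → ℝ → A →L[ℂ] B) :
    cnv (cnv f g) h = cnv f (cnv g h) := by
  funext k t
  unfold cnv
  simp only [ContinuousLinearMap.finset_sum_comp, ContinuousLinearMap.comp_finset_sum]
  rw [Finset.sum_sigma', Finset.sum_sigma']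
  · refine Finset.sum_nbij' (fun p => ⟨p.2, p.1 - p.2⟩) (fun p => ⟨p.1 + p.2, p.1⟩) ?_ ?_ ?_ ?_ ?_ <;>
      simp only [Finset.mem_sigma, Finset.mem_range]
    · intros; omega
    · intros; omega
    · intro p hp; ext1 <;> simp <;> omega
    · intro p hp; ext1 <;> simp <;> omega
    · intro p hp
      have h1 : k - p.2 - (p.1 - p.2) = k - p.1 := by omega
      rw [ContinuousLinearMap.comp_assoc, h1]


lemma isBBM_compR {X Y Z : Type*}
    [NormedAddCommGroup X] [NormedSpace ℂ X]
    [NormedAddCommGroup Y] [NormedSpace ℂ Y]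
    [NormedAddCommGroup Z] [NormedSpace ℂ Z] :
    IsBoundedBilinearMap ℝ (fun p : (Y →L[ℂ] Z) × (X →L[ℂ] Y) => p.1.comp p.2) where
  add_left f₁ f₂ g := by ext v; simp
  smul_left c f g := by ext v; simp
  add_right f g₁ g₂ := by ext v; simp
  smul_right c f g := by ext v; simp
  bound := ⟨1, one_pos, fun f g => by simpa using ContinuousLinearMap.opNorm_comp_le f g⟩

lemma ContDiff.clm_compR {X Y Z : Type*}
    [NormedAddCommGroup X] [NormedSpace ℂ X]
    [NormedAddCommGroup Y] [NormedSpace ℂ Y]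
    [NormedAddCommGroup Z] [NormedSpace ℂ Z]
    {f : ℝ → Y →L[ℂ] Z} {g : ℝ → X →L[ℂ] Y}
    (hf : ContDiff ℝ (⊤ : ℕ∞) f) (hg : ContDiff ℝ (⊤ : ℕ∞) g) :
    ContDiff ℝ (⊤ : ℕ∞) (fun t => (f t).comp (g t)) :=
  ((isBBM_compR (X := X) (Y := Y) (Z := Z)).contDiff.of_le le_top).comp (hf.prodMk hg)

lemma ContDiffAt.clm_compR {X Y Z : Type*}
    [NormedAddCommGroup X] [NormedSpace ℂ X]
    [NormedAddCommGroup Y] [NormedSpace ℂ Y]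
    [NormedAddCommGroup Z] [NormedSpace ℂ Z]
    {f : ℝ → Y →L[ℂ] Z} {g : ℝ → X →L[ℂ] Y} {x : ℝ}
    (hf : ContDiffAt ℝ (⊤ : ℕ∞) f x) (hg : ContDiffAt ℝ (⊤ : ℕ∞) g x) :
    ContDiffAt ℝ (⊤ : ℕ∞) (fun t => (f t).comp (g t)) x :=
  (((isBBM_compR (X := X) (Y := Y) (Z := Z)).contDiff.of_le le_top).contDiffAt).comp x (hf.prodMk hg)

lemma HasDerivAt.clm_compR {X Y Z : Type*}
    [NormedAddCommGroup X] [NormedSpace ℂ X]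
    [NormedAddCommGroup Y] [NormedSpace ℂ Y]
    [NormedAddCommGroup Z] [NormedSpace ℂ Z]
    {f : ℝ → Y →L[ℂ] Z} {g : ℝ → X →L[ℂ] Y} {f' : Y →L[ℂ] Z} {g' : X →L[ℂ] Y} {x : ℝ}
    (hf : HasDerivAt f f' x) (hg : HasDerivAt g g' x) :
    HasDerivAt (fun t => (f t).comp (g t)) (f'.comp (g x) + (f x).comp g') x := by
  have h := (isBBM_compR (X := X) (Y := Y) (Z := Z)).hasFDerivAt (f x, g x)
  have h2 := h.comp_hasDerivAt x (hf.prodMk hg)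
  simp only [IsBoundedBilinearMap.deriv_apply] at h2
  rw [add_comm]; exact h2


section Rec

variable [FiniteDimensional ℂ E]

noncomputable def mkM (g : ℝ → D →ₗ[ℂ] E) (U Ut : ℕ → ℝ → E →L[ℂ] D) (k : ℕ) (t : ℝ) :
    E →L[ℂ] E :=
  LinearMap.toContinuousLinearMap <| (g t).comp
    ((Ut k t - ∑ j ∈ (Finset.range k).attach,
        (U (k - j.1) t).comp (mkM g U Ut j.1 t)) : E →L[ℂ] D).toLinearMap
termination_by k
decreasing_by exact Finset.mem_range.mp j.2

lemma mkM_apply (g : ℝ → D →ₗ[ℂ] E) (U Ut : ℕ → ℝ → E →L[ℂ] D) (k : ℕ) (t : ℝ) (v : E) :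
    mkM g U Ut k t v
      = g t ((Ut k t - ∑ j ∈ Finset.range k, (U (k - j) t).comp (mkM g U Ut j t)) v) := by
  rw [mkM, ← Finset.sum_attach (Finset.range k) (fun j => (U (k - j) t).comp (mkM g U Ut j t))]
  rfl

/-- If `U0 t` is injective with smooth `t ↦ U0 t`, `F` smooth, and `U0 t ∘ Mf t = F t`,
then `Mf` is smooth. -/
lemma smooth_of_comp_eq (U0 : ℝ → E →L[ℂ] D) (hU0 : ContDiff ℝ (⊤ : ℕ∞) U0)
    (hinj : ∀ t, Function.Injective (U0 t))
    (F : ℝ → E →L[ℂ] D) (hF : ContDiff ℝ (⊤ : ℕ∞) F) (Mf : ℝ → E →L[ℂ] E)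
    (hcomp : ∀ t, (U0 t).comp (Mf t) = F t) : ContDiff ℝ (⊤ : ℕ∞) Mf := by
  rw [contDiff_iff_contDiffAt]
  intro t₀
  -- construct a continuous left inverse `L` of `U0 t₀`
  obtain ⟨L, hL⟩ : ∃ L : D →L[ℂ] E, ∀ v : E, L (U0 t₀ v) = v := by
    set p : Submodule ℂ D := LinearMap.range (U0 t₀ : E →ₗ[ℂ] D) with hp
    haveI : FiniteDimensional ℂ p := by
      apply LinearMap.finiteDimensional_range
    obtain ⟨proj, hproj⟩ := Submodule.ClosedComplemented.of_finiteDimensional p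
    set e := LinearEquiv.ofInjective (U0 t₀ : E →ₗ[ℂ] D) (by exact hinj t₀) with he
    refine ⟨(LinearMap.toContinuousLinearMap (e.symm : p →ₗ[ℂ] E)).comp proj, fun v => ?_⟩
    have hv : U0 t₀ v ∈ p := LinearMap.mem_range_self _ v
    have h1 : proj (U0 t₀ v) = ⟨U0 t₀ v, hv⟩ := hproj ⟨U0 t₀ v, hv⟩
    simp only [ContinuousLinearMap.comp_apply, h1]
    have h2 : e v = ⟨U0 t₀ v, hv⟩ := by
      apply Subtype.ext; rfl
    have := congrArg e.symm h2
    rw [LinearEquiv.symm_apply_apply] at this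
    simpa using this.symm
  set A : ℝ → E →L[ℂ] E := fun t => L.comp (U0 t) with hA
  have hAsm : ContDiff ℝ (⊤ : ℕ∞) A := by
    show ContDiff ℝ (⊤ : ℕ∞) fun t => L.comp (U0 t)
    exact ContDiff.clm_compR contDiff_const hU0
  have hA0 : A t₀ = 1 := by
    ext v; simpa [hA] using hL v
  have hunit : ∀ᶠ t in nhds t₀, IsUnit (A t) := by
    have : {x : E →L[ℂ] E | IsUnit x} ∈ nhds (A t₀) := by
      rw [hA0]
      exact (Units.isOpen (R := E →L[ℂ] E)).mem_nhds isUnit_one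
    exact (hAsm.continuous.continuousAt).preimage_mem_nhds this
  have key : Mf =ᶠ[nhds t₀] fun t => (Ring.inverse (A t)) * (L.comp (F t)) := by
    filter_upwards [hunit] with t hu
    have h1 : A t * Mf t = L.comp (F t) := by
      rw [← hcomp t]; rfl
    calc Mf t = (Ring.inverse (A t) * A t) * Mf t := by
          rw [Ring.inverse_mul_cancel _ hu, one_mul]
      _ = Ring.inverse (A t) * (A t * Mf t) := by rw [mul_assoc]
      _ = Ring.inverse (A t) * (L.comp (F t)) := by rw [h1]
  refine ContDiffAt.congr_of_eventuallyEq ?_ key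
  have hinv : ContDiffAt ℝ (⊤ : ℕ∞) (fun t => Ring.inverse (A t)) t₀ := by
    have h1 : ContDiffAt ℂ (⊤ : ℕ∞) (Ring.inverse : (E →L[ℂ] E) → (E →L[ℂ] E)) (A t₀) := by
      rw [hA0]
      exact contDiffAt_ringInverse ℂ 1
    exact (h1.restrict_scalars ℝ).comp t₀ (hAsm.contDiffAt)
  have hLF : ContDiffAt ℝ (⊤ : ℕ∞) (fun t => L.comp (F t)) t₀ :=
    (ContDiff.clm_compR contDiff_const hF).contDiffAt
  exact hinv.clm_compR hLF

end Rec

end Aux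



set_option maxHeartbeats 2000000 in
/-- Adiabatic setting for a group of `N₀` eigenvalues.  Let `(U,Λ)` and
`(Ũ,Λ̃)` be two formal solutions of `(ε D_t + P(t)) V − V M = 0` whose ranges lie in the
range of the adiabatic projection `π` (formally `π U = U`, `π Ũ = Ũ`), with
`U₀(t) : ℂ^{N₀} → Ran π₀(t)` bijective.  Then there is a unique formal power series
`M(t;ε) = M₀(t) + ε M₁(t) + ⋯` of `N₀ × N₀` matrices, smooth in `t`, with `Ũ = U M`.
Conversely, if `M₀(t)` is invertible (with formal inverse series `Minv`), then
`Ũ := U M` and `Λ̃ := M⁻¹ ε D_t(M) + M⁻¹ Λ M` solve the same problem. -/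
theorem stmt_19
    {H D : Type*} [NormedAddCommGroup H] [NormedSpace ℂ H] [CompleteSpace H]
    [NormedAddCommGroup D] [NormedSpace ℂ D] [CompleteSpace D] {N₀ : ℕ}
    (ι : D →L[ℂ] H) (P : ℝ → D →L[ℂ] H) (hP : ContDiff ℝ (⊤ : ℕ∞) P)
    (π : ℕ → ℝ → H →L[ℂ] D)
    (U Ut : ℕ → ℝ → EuclideanSpace ℂ (Fin N₀) →L[ℂ] D)
    (Λ Λt : ℕ → ℝ → EuclideanSpace ℂ (Fin N₀) →L[ℂ] EuclideanSpace ℂ (Fin N₀))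
    (hπdiff : ∀ k, ContDiff ℝ (⊤ : ℕ∞) (π k))
    (hUdiff : ∀ k, ContDiff ℝ (⊤ : ℕ∞) (U k)) (hUtdiff : ∀ k, ContDiff ℝ (⊤ : ℕ∞) (Ut k))
    (hΛdiff : ∀ k, ContDiff ℝ (⊤ : ℕ∞) (Λ k)) (hΛtdiff : ∀ k, ContDiff ℝ (⊤ : ℕ∞) (Λt k))
    -- π is a formal projection commuting with ε D_t + P
    (hidem : ∀ k t,
      ∑ j ∈ Finset.range (k + 1), (π j t).comp (ι.comp (π (k - j) t)) = π k t)
    (hcomm0 : ∀ t (x : D), P t (π 0 t (ι x)) = ι (π 0 t (P t x)))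
    (hcomm : ∀ k t (x : D),
      (-Complex.I) • ι ((deriv (π k) t) (ι x))
          + P t (π (k + 1) t (ι x)) - ι (π (k + 1) t (P t x)) = 0)
    -- (U, Λ) is a formal solution with π U = U
    (heq0 : ∀ t v, P t (U 0 t v) = ι (U 0 t (Λ 0 t v)))
    (heq : ∀ k t v,
      P t (U (k + 1) t v) + (-Complex.I) • ι (deriv (U k) t v)
        = ι (∑ j ∈ Finset.range (k + 2), U j t (Λ (k + 1 - j) t v)))
    (hπU : ∀ k t,
      ∑ j ∈ Finset.range (k + 1), (π j t).comp (ι.comp (U (k - j) t)) = U k t)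
    -- (Ũ, Λ̃) is a formal solution with π Ũ = Ũ
    (hteq0 : ∀ t v, P t (Ut 0 t v) = ι (Ut 0 t (Λt 0 t v)))
    (hteq : ∀ k t v,
      P t (Ut (k + 1) t v) + (-Complex.I) • ι (deriv (Ut k) t v)
        = ι (∑ j ∈ Finset.range (k + 2), Ut j t (Λt (k + 1 - j) t v)))
    (hπUt : ∀ k t,
      ∑ j ∈ Finset.range (k + 1), (π j t).comp (ι.comp (Ut (k - j) t)) = Ut k t)
    -- U₀(t) : ℂ^{N₀} → Ran π₀(t) is bijective
    (hbij : ∀ t, Function.Injective (U 0 t) ∧ Set.range (U 0 t) = Set.range (π 0 t)) :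
    -- direct part: ∃! M with Ũ = U M
    (∃! M : ℕ → ℝ → EuclideanSpace ℂ (Fin N₀) →L[ℂ] EuclideanSpace ℂ (Fin N₀),
      (∀ k, ContDiff ℝ (⊤ : ℕ∞) (M k)) ∧
      ∀ k t, Ut k t = ∑ j ∈ Finset.range (k + 1), (U j t).comp (M (k - j) t)) ∧
    -- converse part
    ∀ M Minv : ℕ → ℝ → EuclideanSpace ℂ (Fin N₀) →L[ℂ] EuclideanSpace ℂ (Fin N₀),
      (∀ k, ContDiff ℝ (⊤ : ℕ∞) (M k)) → (∀ k, ContDiff ℝ (⊤ : ℕ∞) (Minv k)) →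
      (∀ k t, ∑ j ∈ Finset.range (k + 1), (M j t).comp (Minv (k - j) t)
          = if k = 0 then ContinuousLinearMap.id ℂ _ else 0) →
      (∀ k t, ∑ j ∈ Finset.range (k + 1), (Minv j t).comp (M (k - j) t)
          = if k = 0 then ContinuousLinearMap.id ℂ _ else 0) →
      ∃ (U' : ℕ → ℝ → EuclideanSpace ℂ (Fin N₀) →L[ℂ] D)
        (Λ' : ℕ → ℝ → EuclideanSpace ℂ (Fin N₀) →L[ℂ] EuclideanSpace ℂ (Fin N₀)),
        -- U' = U M
        (∀ k t, U' k t = ∑ j ∈ Finset.range (k + 1), (U j t).comp (M (k - j) t)) ∧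
        -- Λ' = M⁻¹ ε D_t(M) + M⁻¹ Λ M
        (∀ k t, Λ' k t
            = (∑ j ∈ Finset.range k,
                (Minv j t).comp ((-Complex.I) • deriv (M (k - 1 - j)) t))
              + ∑ j ∈ Finset.range (k + 1), ∑ l ∈ Finset.range (k - j + 1),
                  (Minv j t).comp ((Λ l t).comp (M (k - j - l) t))) ∧
        -- (U', Λ') is a formal solution
        (∀ t v, P t (U' 0 t v) = ι (U' 0 t (Λ' 0 t v))) ∧
        ∀ k t v,
          P t (U' (k + 1) t v) + (-Complex.I) • ι (deriv (U' k) t v)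
            = ι (∑ j ∈ Finset.range (k + 2), U' j t (Λ' (k + 1 - j) t v)) := by
  constructor
  · -- direct part: existence and uniqueness of M
    classical
    have hinj : ∀ t, Function.Injective (U 0 t) := fun t => (hbij t).1
    have hgex : ∀ t, ∃ g : D →ₗ[ℂ] EuclideanSpace ℂ (Fin N₀),
        g.comp ((U 0 t) : EuclideanSpace ℂ (Fin N₀) →ₗ[ℂ] D) = LinearMap.id := fun t =>
      LinearMap.exists_leftInverse_of_injective _ (LinearMap.ker_eq_bot.mpr (hinj t))
    choose g hg using hgex
    have hgap : ∀ t u, g t (U 0 t u) = u := by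
      intro t u
      have h := LinearMap.congr_fun (hg t) u
      simpa using h
    set Mf := mkM g U Ut with hMf
    have hkey : ∀ k t, (U 0 t).comp (Mf k t)
        = Ut k t - ∑ j ∈ Finset.range k, (U (k - j) t).comp (Mf j t) := by
      intro k
      induction k using Nat.strong_induction_on with
      | _ k IH =>
      intro t
      have hconv : ∀ m, m < k → ∀ v, Ut m t v
          = ∑ l ∈ Finset.range (m+1), U l t (Mf (m - l) t v) := by
        intro m hm v
        have h := IH m hm t
        have h2 : Ut m t v = U 0 t (Mf m t v) + ∑ j ∈ Finset.range m, U (m - j) t (Mf j t v) := by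
          have h3 := DFunLike.congr_fun h v
          simp only [ContinuousLinearMap.comp_apply, ContinuousLinearMap.sub_apply,
            ContinuousLinearMap.sum_apply] at h3
          exact eq_add_of_sub_eq h3.symm
        rw [h2, ← Finset.sum_range_reflect (fun l => U l t (Mf (m - l) t v)) (m+1),
          Finset.sum_range_succ, add_comm]
        congr 1
        · apply Finset.sum_congr rfl
          intro j hj
          have hjm := Finset.mem_range.mp hj
          rw [show m + 1 - 1 - j = m - j from by omega, show m - (m - j) = j from by omega]
        · simp
      have hrange : ∀ v, (Ut k t - ∑ j ∈ Finset.range k, (U (k - j) t).comp (Mf j t)) v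
          ∈ Set.range (U 0 t) := by
        intro v
        rw [(hbij t).2]
        set wv := (Ut k t - ∑ j ∈ Finset.range k, (U (k - j) t).comp (Mf j t)) v with hwv
        refine ⟨ι wv, ?_⟩
        have hUt0 : π 0 t (ι (Ut k t v)) = Ut k t v
            - ∑ i ∈ Finset.range k, π (i+1) t (ι (Ut (k - 1 - i) t v)) := by
          have h := DFunLike.congr_fun (hπUt k t) v
          simp only [ContinuousLinearMap.sum_apply, ContinuousLinearMap.comp_apply] at h
          rw [Finset.sum_range_succ'] at h
          have hidx : ∀ i ∈ Finset.range k, π (i+1) t (ι (Ut (k - (i+1)) t v))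
              = π (i+1) t (ι (Ut (k - 1 - i) t v)) := by
            intro i hi
            rw [show k - (i+1) = k - 1 - i from by omega]
          rw [Finset.sum_congr rfl hidx, Nat.sub_zero] at h
          exact eq_sub_of_add_eq' h
        have hU0m : ∀ j ∈ Finset.range k, π 0 t (ι (U (k - j) t (Mf j t v)))
            = U (k - j) t (Mf j t v)
              - ∑ i ∈ Finset.range (k - j), π (i+1) t (ι (U (k - j - 1 - i) t (Mf j t v))) := by
          intro j hj
          have hjk := Finset.mem_range.mp hj
          have h := DFunLike.congr_fun (hπU (k - j) t) (Mf j t v)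
          simp only [ContinuousLinearMap.sum_apply, ContinuousLinearMap.comp_apply] at h
          rw [Finset.sum_range_succ'] at h
          have hidx : ∀ i ∈ Finset.range (k - j), π (i+1) t (ι (U (k - j - (i+1)) t (Mf j t v)))
              = π (i+1) t (ι (U (k - j - 1 - i) t (Mf j t v))) := by
            intro i hi
            rw [show k - j - (i+1) = k - j - 1 - i from by omega]
          rw [Finset.sum_congr rfl hidx, Nat.sub_zero] at h
          exact eq_sub_of_add_eq' h
        have hexp : π 0 t (ι wv) = π 0 t (ι (Ut k t v))
            - ∑ j ∈ Finset.range k, π 0 t (ι (U (k - j) t (Mf j t v))) := by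
          rw [hwv]
          simp only [ContinuousLinearMap.sub_apply, ContinuousLinearMap.sum_apply,
            ContinuousLinearMap.comp_apply, map_sub, map_sum]
        have hS : ∑ i ∈ Finset.range k, π (i+1) t (ι (Ut (k - 1 - i) t v))
            = ∑ j ∈ Finset.range k, ∑ i ∈ Finset.range (k - j),
                π (i+1) t (ι (U (k - j - 1 - i) t (Mf j t v))) := by
          have step1 : ∀ i ∈ Finset.range k, π (i+1) t (ι (Ut (k - 1 - i) t v))
              = ∑ l ∈ Finset.range (k - i), π (i+1) t (ι (U l t (Mf (k - 1 - i - l) t v))) := by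
            intro i hi
            have hik := Finset.mem_range.mp hi
            have hc := hconv (k - 1 - i) (by omega) v
            rw [hc, show k - 1 - i + 1 = k - i from by omega, map_sum, map_sum]
          rw [Finset.sum_congr rfl step1]
          have step2 : ∀ i ∈ Finset.range k,
              ∑ l ∈ Finset.range (k - i), π (i+1) t (ι (U l t (Mf (k - 1 - i - l) t v)))
                = ∑ j ∈ Finset.range (k - i), π (i+1) t (ι (U (k - j - 1 - i) t (Mf j t v))) := by
            intro i hi
            have hik := Finset.mem_range.mp hi
            rw [← Finset.sum_range_reflect
              (fun l => π (i+1) t (ι (U l t (Mf (k - 1 - i - l) t v)))) (k - i)]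
            apply Finset.sum_congr rfl
            intro j hj
            have hjk := Finset.mem_range.mp hj
            rw [show k - i - 1 - j = k - j - 1 - i from by omega,
              show k - 1 - i - (k - j - 1 - i) = j from by omega]
          rw [Finset.sum_congr rfl step2]
          exact sum_tri_comm k (fun i j => π (i+1) t (ι (U (k - j - 1 - i) t (Mf j t v))))
        rw [hexp, hUt0, Finset.sum_congr rfl hU0m, Finset.sum_sub_distrib, hS, hwv]
        simp only [ContinuousLinearMap.sub_apply, ContinuousLinearMap.sum_apply,
          ContinuousLinearMap.comp_apply]
        abel
      refine ContinuousLinearMap.ext fun v => ?_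
      obtain ⟨u, hu⟩ := hrange v
      rw [ContinuousLinearMap.comp_apply]
      have hm : Mf k t v
          = g t ((Ut k t - ∑ j ∈ Finset.range k, (U (k - j) t).comp (Mf j t)) v) :=
        mkM_apply g U Ut k t v
      rw [hm, ← hu, hgap]
    have hconvAll : ∀ k t, Ut k t = ∑ j ∈ Finset.range (k+1), (U j t).comp (Mf (k - j) t) := by
      intro k t
      have h := hkey k t
      have h2 : Ut k t = (U 0 t).comp (Mf k t)
          + ∑ j ∈ Finset.range k, (U (k - j) t).comp (Mf j t) := eq_add_of_sub_eq h.symm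
      rw [h2, ← Finset.sum_range_reflect (fun j => (U j t).comp (Mf (k - j) t)) (k+1),
        Finset.sum_range_succ, add_comm]
      congr 1
      · apply Finset.sum_congr rfl
        intro j hj
        have hjk := Finset.mem_range.mp hj
        rw [show k + 1 - 1 - j = k - j from by omega, show k - (k - j) = j from by omega]
      · simp
    have hsmooth : ∀ k, ContDiff ℝ (⊤ : ℕ∞) (Mf k) := by
      intro k
      induction k using Nat.strong_induction_on with
      | _ k IH =>
      refine smooth_of_comp_eq (U 0) (hUdiff 0) hinj
        (fun t => Ut k t - ∑ j ∈ Finset.range k, (U (k - j) t).comp (Mf j t)) ?_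
        (Mf k) (fun t => hkey k t)
      exact (hUtdiff k).sub
        (ContDiff.sum fun j hj =>
          ContDiff.clm_compR (hUdiff (k - j)) (IH j (Finset.mem_range.mp hj)))
    refine ⟨Mf, ⟨hsmooth, hconvAll⟩, ?_⟩
    rintro N ⟨hNsm, hNconv⟩
    funext k
    induction k using Nat.strong_induction_on with
    | _ k IH =>
    funext t
    have h1 := hNconv k t
    have h2 := hconvAll k t
    rw [Finset.sum_range_succ'] at h1 h2
    have hsame : ∀ i ∈ Finset.range k, (U (i+1) t).comp (N (k - (i+1)) t)
        = (U (i+1) t).comp (Mf (k - (i+1)) t) := by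
      intro i hi
      have hik := Finset.mem_range.mp hi
      rw [IH (k - (i+1)) (by omega)]
    rw [Finset.sum_congr rfl hsame] at h1
    have h4 : (U 0 t).comp (N (k - 0) t) = (U 0 t).comp (Mf (k - 0) t) :=
      add_left_cancel (h1.symm.trans h2)
    refine ContinuousLinearMap.ext fun v => ?_
    have h5 := DFunLike.congr_fun h4 v
    simp only [ContinuousLinearMap.comp_apply, Nat.sub_zero] at h5
    exact hinj t h5
  · intro M Minv hM hMinv hMMinv hMinvM
    set X : ℕ → ℝ → EuclideanSpace ℂ (Fin N₀) →L[ℂ] EuclideanSpace ℂ (Fin N₀) :=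
      fun k t => if k = 0 then 0 else (-Complex.I) • deriv (M (k - 1)) t with hXdef
    set Z : ℕ → ℝ → EuclideanSpace ℂ (Fin N₀) →L[ℂ] EuclideanSpace ℂ (Fin N₀) :=
      fun k t => X k t + cnv Λ M k t with hZdef
    have hMder : ∀ j t, HasDerivAt (M j) (deriv (M j) t) t :=
      fun j t => ((hM j).differentiable (by simp) t).hasDerivAt
    have hUder : ∀ j t, HasDerivAt (U j) (deriv (U j) t) t :=
      fun j t => ((hUdiff j).differentiable (by simp) t).hasDerivAt
    have hMMinv' : cnv M Minv = fun k t => if k = 0 then ContinuousLinearMap.id ℂ _ else 0 := by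
      funext k t; exact hMMinv k t
    have hdelta : cnv (cnv M Minv) Z = Z := by
      funext n t
      show ∑ j ∈ Finset.range (n+1), (cnv M Minv j t).comp (Z (n - j) t) = Z n t
      rw [hMMinv']
      rw [Finset.sum_eq_single_of_mem 0 (Finset.mem_range.mpr (Nat.succ_pos n))
        (fun b _ hb => by simp [hb])]
      simp
    have hUZ : cnv (cnv U M) (cnv Minv Z) = cnv U Z := by
      rw [cnv_assoc U M (cnv Minv Z), ← cnv_assoc M Minv Z, hdelta]
    refine ⟨cnv U M, cnv Minv Z, fun k t => rfl, ?_, ?_, ?_⟩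
    · -- the formula for Λ'
      intro k t
      show ∑ j ∈ Finset.range (k+1), (Minv j t).comp (Z (k - j) t) = _
      have hz : ∀ j, Z j t = X j t + cnv Λ M j t := fun j => rfl
      simp only [hz, ContinuousLinearMap.comp_add]
      rw [Finset.sum_add_distrib]
      congr 1
      · rw [Finset.sum_range_succ]
        have h0 : X 0 t = 0 := by simp [hXdef]
        rw [Nat.sub_self, h0, ContinuousLinearMap.comp_zero, add_zero]
        apply Finset.sum_congr rfl
        intro j hj
        have hj' := Finset.mem_range.mp hj
        have hx : X (k - j) t = (-Complex.I) • deriv (M (k - 1 - j)) t := by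
          have hne : ¬ (k - j = 0) := by omega
          have hidx : k - j - 1 = k - 1 - j := by omega
          simp [hXdef, hne, hidx]
        rw [hx]
      · apply Finset.sum_congr rfl
        intro j hj
        calc (Minv j t).comp (cnv Λ M (k - j) t)
            = (Minv j t).comp (∑ l ∈ Finset.range (k - j + 1), (Λ l t).comp (M (k - j - l) t)) := rfl
          _ = ∑ l ∈ Finset.range (k - j + 1), (Minv j t).comp ((Λ l t).comp (M (k - j - l) t)) := by
              rw [ContinuousLinearMap.comp_finset_sum]
    · -- order-0 equation
      intro t v
      have hMinv0 : ∀ w, M 0 t (Minv 0 t w) = w := by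
        intro w
        have h := hMMinv 0 t
        rw [Finset.sum_range_one] at h
        have h2 := DFunLike.congr_fun h w
        simpa using h2
      show P t (cnv U M 0 t v) = ι (cnv U M 0 t (cnv Minv Z 0 t v))
      have e1 : ∀ w, cnv U M 0 t w = U 0 t (M 0 t w) := by intro w; simp [cnv_apply]
      have e2 : cnv Minv Z 0 t v = Minv 0 t (Λ 0 t (M 0 t v)) := by
        simp [cnv_apply, hZdef, hXdef, ContinuousLinearMap.add_apply]
      rw [e1, e2, e1, heq0, hMinv0]
    · -- higher-order equations
      intro k t v
      have hDk : HasDerivAt (cnv U M k)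
          (∑ j ∈ Finset.range (k+1),
            ((deriv (U j) t).comp (M (k - j) t) + (U j t).comp (deriv (M (k - j)) t))) t := by
        have hterm : ∀ j ∈ Finset.range (k+1),
            HasDerivAt (fun s => (U j s).comp (M (k - j) s))
              ((deriv (U j) t).comp (M (k - j) t) + (U j t).comp (deriv (M (k - j)) t)) t :=
          fun j _ => (hUder j t).clm_compR (hMder (k - j) t)
        exact HasDerivAt.fun_sum hterm
      have hderiv : deriv (cnv U M k) t = ∑ j ∈ Finset.range (k+1),
          ((deriv (U j) t).comp (M (k - j) t) + (U j t).comp (deriv (M (k - j)) t)) := hDk.deriv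
      have hDside : (-Complex.I) • ι (deriv (cnv U M k) t v)
          = (∑ i ∈ Finset.range (k+1), (-Complex.I) • ι (deriv (U i) t (M (k - i) t v)))
            + ∑ i ∈ Finset.range (k+1), (-Complex.I) • ι (U i t (deriv (M (k - i)) t v)) := by
        rw [hderiv]
        simp only [ContinuousLinearMap.sum_apply, ContinuousLinearMap.add_apply,
          ContinuousLinearMap.comp_apply, map_sum, map_add, Finset.smul_sum, smul_add]
        rw [Finset.sum_add_distrib]
      have hPside : P t (cnv U M (k+1) t v)
          = ((∑ i ∈ Finset.range (k+1), ι (cnv U Λ (i+1) t (M (k - i) t v)))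
              + ι (cnv U Λ 0 t (M (k+1) t v)))
            - ∑ i ∈ Finset.range (k+1), (-Complex.I) • ι (deriv (U i) t (M (k - i) t v)) := by
        have h1 : P t (cnv U M (k+1) t v) = ∑ j ∈ Finset.range (k+2), P t (U j t (M (k+1-j) t v)) := by
          rw [cnv_apply, map_sum]
        rw [h1, Finset.sum_range_succ']
        have h2 : ∀ i ∈ Finset.range (k+1), P t (U (i+1) t (M (k+1-(i+1)) t v))
            = ι (cnv U Λ (i+1) t (M (k - i) t v))
              - (-Complex.I) • ι (deriv (U i) t (M (k - i) t v)) := by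
          intro i hi
          have hidx : k + 1 - (i+1) = k - i := by omega
          rw [hidx, cnv_apply]
          exact eq_sub_of_add_eq (heq i t (M (k - i) t v))
        rw [Finset.sum_congr rfl h2, Finset.sum_sub_distrib]
        have h3 : P t (U 0 t (M (k+1-0) t v)) = ι (cnv U Λ 0 t (M (k+1) t v)) := by
          rw [Nat.sub_zero, heq0]
          simp [cnv_apply]
        rw [h3]
        abel
      have piece1 : ∑ j ∈ Finset.range (k+2), ι (U j t (X (k+1-j) t v))
          = ∑ i ∈ Finset.range (k+1), (-Complex.I) • ι (U i t (deriv (M (k - i)) t v)) := by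
        rw [Finset.sum_range_succ]
        have h0 : X (k+1-(k+1)) t v = 0 := by simp [hXdef]
        rw [h0]
        simp only [map_zero, add_zero]
        apply Finset.sum_congr rfl
        intro j hj
        have hj' := Finset.mem_range.mp hj
        have hx : X (k+1-j) t v = (-Complex.I) • deriv (M (k - j)) t v := by
          have hne : ¬ (k + 1 - j = 0) := by omega
          have hidx : k + 1 - j - 1 = k - j := by omega
          simp [hXdef, hne, hidx]
        rw [hx, map_smul, map_smul]
      have piece2 : ι (∑ j ∈ Finset.range (k+2), U j t (cnv Λ M (k+1-j) t v))
          = (∑ i ∈ Finset.range (k+1), ι (cnv U Λ (i+1) t (M (k - i) t v)))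
            + ι (cnv U Λ 0 t (M (k+1) t v)) := by
        have e1 : ∑ j ∈ Finset.range (k+2), U j t (cnv Λ M (k+1-j) t v)
            = cnv U (cnv Λ M) (k+1) t v := (cnv_apply _ _ _ _ _).symm
        rw [e1, ← cnv_assoc, cnv_apply, Finset.sum_range_succ']
        rw [map_add, map_sum]
        congr 1
        apply Finset.sum_congr rfl
        intro i hi
        have hidx : k + 1 - (i+1) = k - i := by omega
        rw [hidx]
      have hRside : ι (∑ j ∈ Finset.range (k+2), cnv U M j t (cnv Minv Z (k+1-j) t v))
          = ((∑ i ∈ Finset.range (k+1), ι (cnv U Λ (i+1) t (M (k - i) t v)))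
              + ι (cnv U Λ 0 t (M (k+1) t v)))
            + ∑ i ∈ Finset.range (k+1), (-Complex.I) • ι (U i t (deriv (M (k - i)) t v)) := by
        have e1 : ∑ j ∈ Finset.range (k+2), cnv U M j t (cnv Minv Z (k+1-j) t v)
            = cnv (cnv U M) (cnv Minv Z) (k+1) t v := (cnv_apply _ _ _ _ _).symm
        rw [e1, hUZ, cnv_apply]
        have esplit : ∑ j ∈ Finset.range (k+2), U j t (Z (k+1-j) t v)
            = (∑ j ∈ Finset.range (k+2), U j t (X (k+1-j) t v))
              + ∑ j ∈ Finset.range (k+2), U j t (cnv Λ M (k+1-j) t v) := by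
          rw [← Finset.sum_add_distrib]
          apply Finset.sum_congr rfl
          intro j _
          have : Z (k+1-j) t v = X (k+1-j) t v + cnv Λ M (k+1-j) t v := rfl
          rw [this, map_add]
        rw [esplit, map_add, map_sum, piece1, piece2]
        abel
      show P t (cnv U M (k+1) t v) + (-Complex.I) • ι (deriv (cnv U M k) t v)
          = ι (∑ j ∈ Finset.range (k+2), cnv U M j t (cnv Minv Z (k+1-j) t v))
      rw [hPside, hDside, hRside]
      abel
end
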